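/- (Soundness and tightness of Simul-CROWN for linear classifiers, case ŷ = 1.) Let x, x' ∈ ℝⁿ, let l, u ∈ ℝⁿ with lᵢ ≤ uᵢ, and b̲ ≤ b̄ ∈ ℝ define the parameter box B = [l,u] × [b̲, b̄]. Assume the set Δ = {(w,b) ∈ B : w·x + b ≥ 0} is nonempty. Let t = sup{w·x' + b : (w,b) ∈ Δ} (the Simul-CROWN value) and U = Σᵢ max(lᵢ·x'ᵢ, uᵢ·x'ᵢ) + b̄ (the IBP/CROWN-IBP value). Then sup{(σ(w·x' + b))² : (w,b) ∈ Δ} ≤ (σ(t))² ≤ (σ(U))²; i.e., the Simul-CROWN overapproximated robust loss upper-bounds the true robust counterfactual loss over Δ and lower-bounds the IBP/CROWN-IBP overapproximated loss. -/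

import Mathlib

/-!
Since `s ↦ σ(s)²` is monotone, the supremum of the loss over `Δ` is at most the loss at the
supremum `t` of the scores. Each score `w·x' + b` is bounded by `U` coordinatewise, as
`wᵢ x'ᵢ ≤ max (lᵢ x'ᵢ) (uᵢ x'ᵢ)` for `wᵢ ∈ [lᵢ, uᵢ]`; hence `t ≤ U`, and monotonicity again gives
the second inequality.
-/

noncomputable def sigmoid (t : ℝ) : ℝ := 1 / (1 + Real.exp (-t))

lemma sigmoid_eq_real_sigmoid : sigmoid = Real.sigmoid := by
  funext t
  rw [sigmoid, Real.sigmoid_def, one_div]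

lemma monotone_sigmoid_sq : Monotone fun t => sigmoid t ^ 2 := by
  rw [sigmoid_eq_real_sigmoid]
  exact fun _ _ h => pow_le_pow_left₀ (Real.sigmoid_nonneg _) (Real.sigmoid_le h) 2

lemma mul_le_max_mul_of_mem_Icc {l u w y : ℝ} (hl : l ≤ w) (hu : w ≤ u) :
    w * y ≤ max (l * y) (u * y) := by
  rcases le_total 0 y with hy | hy
  · exact le_max_of_le_right (mul_le_mul_of_nonneg_right hu hy)
  · exact le_max_of_le_left (mul_le_mul_of_nonpos_right hl hy)

lemma sum_mul_le_sum_max_mul {ι : Type*} (s : Finset ι) {l u w y : ι → ℝ}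
    (hw : ∀ i, l i ≤ w i ∧ w i ≤ u i) :
    ∑ i ∈ s, w i * y i ≤ ∑ i ∈ s, max (l i * y i) (u i * y i) :=
  Finset.sum_le_sum fun i _ => mul_le_max_mul_of_mem_Icc (hw i).1 (hw i).2

theorem simulCROWN_sound_tight_y1_general (n : ℕ) (x x' l u : Fin n → ℝ) (bl bu : ℝ)
    (hne : ∃ (w : Fin n → ℝ) (b : ℝ), (∀ i, l i ≤ w i ∧ w i ≤ u i) ∧
      bl ≤ b ∧ b ≤ bu ∧ 0 ≤ (∑ i, w i * x i) + b)
    (t U : ℝ)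
    (ht : t = sSup {v : ℝ | ∃ (w : Fin n → ℝ) (b : ℝ),
      (∀ i, l i ≤ w i ∧ w i ≤ u i) ∧ bl ≤ b ∧ b ≤ bu ∧
      0 ≤ (∑ i, w i * x i) + b ∧ v = (∑ i, w i * x' i) + b})
    (hU : U = (∑ i, max (l i * x' i) (u i * x' i)) + bu) :
    sSup {v : ℝ | ∃ (w : Fin n → ℝ) (b : ℝ),
        (∀ i, l i ≤ w i ∧ w i ≤ u i) ∧ bl ≤ b ∧ b ≤ bu ∧
        0 ≤ (∑ i, w i * x i) + b ∧
        v = (sigmoid ((∑ i, w i * x' i) + b)) ^ 2} ≤ (sigmoid t) ^ 2 ∧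
      (sigmoid t) ^ 2 ≤ (sigmoid U) ^ 2 := by
  set S : Set ℝ := {v : ℝ | ∃ (w : Fin n → ℝ) (b : ℝ),
      (∀ i, l i ≤ w i ∧ w i ≤ u i) ∧ bl ≤ b ∧ b ≤ bu ∧
      0 ≤ (∑ i, w i * x i) + b ∧ v = (∑ i, w i * x' i) + b}
  have hS : S.Nonempty := by
    obtain ⟨w, b, hw, hbl, hbu, hpos⟩ := hne
    exact ⟨_, w, b, hw, hbl, hbu, hpos, rfl⟩
  have hSU : U ∈ upperBounds S := by
    rintro _ ⟨w, b, hw, -, hbu, -, rfl⟩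
    rw [hU]
    exact add_le_add (sum_mul_le_sum_max_mul _ hw) hbu
  have hloss : {v : ℝ | ∃ (w : Fin n → ℝ) (b : ℝ),
      (∀ i, l i ≤ w i ∧ w i ≤ u i) ∧ bl ≤ b ∧ b ≤ bu ∧
      0 ≤ (∑ i, w i * x i) + b ∧ v = (sigmoid ((∑ i, w i * x' i) + b)) ^ 2} =
      (fun s => sigmoid s ^ 2) '' S := by
    ext v
    constructor
    · rintro ⟨w, b, hw, hbl, hbu, hpos, rfl⟩
      exact ⟨_, ⟨w, b, hw, hbl, hbu, hpos, rfl⟩, rfl⟩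
    · rintro ⟨_, ⟨w, b, hw, hbl, hbu, hpos, rfl⟩, rfl⟩
      exact ⟨w, b, hw, hbl, hbu, hpos, rfl⟩
  rw [hloss, ht]
  exact ⟨monotone_sigmoid_sq.csSup_image_le_map_csSup hS ⟨U, hSU⟩,
    monotone_sigmoid_sq (csSup_le hS hSU)⟩

/-- Soundness and tightness of Simul-CROWN for linear classifiers, case ŷ = 1:
the Simul-CROWN overapproximated robust loss `(σ t)²` upper-bounds the true
robust counterfactual loss over the prediction-preserving multiplicity set `Δ`
and lower-bounds the IBP/CROWN-IBP overapproximated loss `(σ U)²`. -/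
theorem simulCROWN_sound_tight_y1 (n : ℕ) (x x' l u : Fin n → ℝ) (bl bu : ℝ)
    (hlu : ∀ i, l i ≤ u i) (hb : bl ≤ bu)
    (hne : ∃ (w : Fin n → ℝ) (b : ℝ), (∀ i, l i ≤ w i ∧ w i ≤ u i) ∧
      bl ≤ b ∧ b ≤ bu ∧ 0 ≤ (∑ i, w i * x i) + b)
    (t U : ℝ)
    (ht : t = sSup {v : ℝ | ∃ (w : Fin n → ℝ) (b : ℝ),
      (∀ i, l i ≤ w i ∧ w i ≤ u i) ∧ bl ≤ b ∧ b ≤ bu ∧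
      0 ≤ (∑ i, w i * x i) + b ∧ v = (∑ i, w i * x' i) + b})
    (hU : U = (∑ i, max (l i * x' i) (u i * x' i)) + bu) :
    sSup {v : ℝ | ∃ (w : Fin n → ℝ) (b : ℝ),
        (∀ i, l i ≤ w i ∧ w i ≤ u i) ∧ bl ≤ b ∧ b ≤ bu ∧
        0 ≤ (∑ i, w i * x i) + b ∧
        v = (sigmoid ((∑ i, w i * x' i) + b)) ^ 2} ≤ (sigmoid t) ^ 2 ∧
      (sigmoid t) ^ 2 ≤ (sigmoid U) ^ 2 :=
  simulCROWN_sound_tight_y1_general n x x' l u bl bu hne t U ht hU
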